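/- Let (M, 𝒜) be an uncertainty matroid on a finite ground set E and let e ∈ E be blue. Then T ⊆ E − e is a uniformly optimal basis of (M/e, 𝒜|_{E−e}) if and only if T + e is a uniformly optimal basis of (M, 𝒜). -/

import Mathlib

open Matroid

variable {α : Type*}

/-- `A` is an uncertainty area function for `M`: each element of the ground set gets a
nonempty bounded set of reals. -/
def IsAreaFun (M : Matroid α) (A : α → Set ℝ) : Prop :=
  ∀ e ∈ M.E, (A e).Nonempty ∧ BddBelow (A e) ∧ BddAbove (A e)

/-- A realization: a weight function with `w e ∈ A e` for every element of the ground set. -/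
def Realization (M : Matroid α) (A : α → Set ℝ) (w : α → ℝ) : Prop :=
  ∀ e ∈ M.E, w e ∈ A e

/-- The total `w`-weight of a set. -/
noncomputable def setWeight (w : α → ℝ) (T : Set α) : ℝ := ∑ᶠ e ∈ T, w e

/-- A `w`-basis: a basis of `M` of minimum total `w`-weight. -/
def IsMinBasis (M : Matroid α) (w : α → ℝ) (T : Set α) : Prop :=
  M.IsBase T ∧ ∀ B, M.IsBase B → setWeight w T ≤ setWeight w B

/-- A uniformly optimal basis (an `A`-basis): a `w`-basis for every realization `w`. -/
def IsUOB (M : Matroid α) (A : α → Set ℝ) (T : Set α) : Prop :=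
  ∀ w, Realization M A w → IsMinBasis M w T

/-- An element is certain if its area is a singleton. -/
def Certain (A : α → Set ℝ) (e : α) : Prop := ∃ r : ℝ, A e = {r}

/-- `e` is blue if every realization admits a minimum weight basis containing `e`. -/
def Blue (M : Matroid α) (A : α → Set ℝ) (e : α) : Prop :=
  ∀ w, Realization M A w → ∃ T, IsMinBasis M w T ∧ e ∈ T

/-- `e` is red if every realization admits a minimum weight basis avoiding `e`. -/
def Red (M : Matroid α) (A : α → Set ℝ) (e : α) : Prop :=
  ∀ w, Realization M A w → ∃ T, IsMinBasis M w T ∧ e ∉ T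

/-- `e` is colored if it is blue or red. -/
def Colored (M : Matroid α) (A : α → Set ℝ) (e : α) : Prop :=
  Blue M A e ∨ Red M A e

/-- Deletion of a set of elements from a matroid. -/
def Matroid.del (M : Matroid α) (D : Set α) : Matroid α := M ↾ (M.E \ D)

/-- Contraction of a set of elements in a matroid, defined by duality. -/
def Matroid.con (M : Matroid α) (C : Set α) : Matroid α := (M✶.del C)✶

/-!
Since `e` is blue it is not a loop, so the bases of `M ／ {e}` are exactly the sets `B` with
`B + e` a basis of `M`, and `w(B + e) = w(e) + w(B)`. Hence `T + e` beats every `B + e` iff `T`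
beats every `B`. For the forward direction, every basis of `M` is beaten by some minimum basis
containing `e` (blueness); for the converse, a realization of the contraction is extended to one
of `M` by giving `e` any weight in its area.
-/

open Set

lemma Matroid.con_eq_contract (M : Matroid α) (C : Set α) : M.con C = M ／ C := rfl

lemma Matroid.IsNonloop.contractElem_isBase_iff {M : Matroid α} {e : α} {B : Set α}
    (he : M.IsNonloop e) : (M ／ {e}).IsBase B ↔ M.IsBase (insert e B) ∧ e ∉ B := by
  simp [he.indep.contract_isBase_iff, union_singleton]

lemma setWeight_insert (w : α → ℝ) {e : α} {S : Set α} (heS : e ∉ S) (hS : S.Finite) :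
    setWeight w (insert e S) = w e + setWeight w S :=
  finsum_mem_insert w heS hS

section

variable {M : Matroid α} {A : α → Set ℝ} {w : α → ℝ} {e : α} {T : Set α}

lemma IsAreaFun.exists_realization (hA : IsAreaFun M A) : ∃ w, Realization M A w :=
  ⟨fun x ↦ Classical.epsilon (· ∈ A x), fun x hx ↦ Classical.epsilon_spec (hA x hx).1⟩

lemma Realization.mono {N : Matroid α} (hw : Realization M A w) (hNM : N.E ⊆ M.E) :
    Realization N A w :=
  fun x hx ↦ hw x (hNM hx)

lemma Realization.update_of_contractElem [DecidableEq α] {r : ℝ} (hw : Realization (M ／ {e}) A w)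
    (hr : r ∈ A e) : Realization M A (Function.update w e r) := by
  intro x hx
  obtain rfl | hxe := eq_or_ne x e
  · simpa using hr
  · simpa [hxe] using hw x ⟨hx, hxe⟩

lemma Blue.isNonloop (hA : IsAreaFun M A) (h : Blue M A e) : M.IsNonloop e := by
  obtain ⟨w, hw⟩ := hA.exists_realization
  obtain ⟨B, hB, heB⟩ := h w hw
  exact hB.1.indep.isNonloop_of_mem heB

lemma IsMinBasis.congr {w' : α → ℝ} (hT : IsMinBasis M w T) (h : ∀ x ∈ M.E, w x = w' x) :
    IsMinBasis M w' T := by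
  have hweight {B : Set α} (hB : M.IsBase B) : setWeight w B = setWeight w' B :=
    finsum_mem_congr rfl fun x hx ↦ h x (hB.subset_ground hx)
  refine ⟨hT.1, fun B hB ↦ ?_⟩
  rw [← hweight hT.1, ← hweight hB]
  exact hT.2 B hB

variable [M.Finite]

lemma IsMinBasis.insert_of_contractElem {B : Set α} (hB : IsMinBasis M w B) (heB : e ∈ B)
    (hT : IsMinBasis (M ／ {e}) w T) : IsMinBasis M w (insert e T) := by
  have he := hB.1.indep.isNonloop_of_mem heB
  obtain ⟨hTe, heT⟩ := he.contractElem_isBase_iff.1 hT.1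
  have hinsert : insert e (B \ {e}) = B := by rw [insert_sdiff_singleton, insert_eq_of_mem heB]
  have heB' : e ∉ B \ {e} := fun h ↦ h.2 rfl
  have hBe : (M ／ {e}).IsBase (B \ {e}) :=
    he.contractElem_isBase_iff.2 ⟨by rw [hinsert]; exact hB.1, heB'⟩
  refine ⟨hTe, fun B' hB' ↦ ?_⟩
  calc setWeight w (insert e T) = w e + setWeight w T :=
        setWeight_insert w heT (M.set_finite T (hT.1.subset_ground.trans sdiff_subset))
    _ ≤ w e + setWeight w (B \ {e}) := by gcongr; exact hT.2 _ hBe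
    _ = setWeight w B := by
        rw [← setWeight_insert w heB' (M.set_finite _ (sdiff_subset.trans hB.1.subset_ground)),
          hinsert]
    _ ≤ setWeight w B' := hB.2 B' hB'

lemma IsMinBasis.contractElem_of_insert (he : M.IsNonloop e) (heT : e ∉ T)
    (hT : IsMinBasis M w (insert e T)) : IsMinBasis (M ／ {e}) w T := by
  refine ⟨he.contractElem_isBase_iff.2 ⟨hT.1, heT⟩, fun B hB ↦ ?_⟩
  obtain ⟨hBe, heB⟩ := he.contractElem_isBase_iff.1 hB
  have h := hT.2 _ hBe
  rw [setWeight_insert w heT (M.set_finite T (subset_insert e T |>.trans hT.1.subset_ground)),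
    setWeight_insert w heB (M.set_finite B (subset_insert e B |>.trans hBe.subset_ground))] at h
  linarith

end

/-- Contracting a blue element preserves uniformly optimal bases. -/
theorem blue_contract_uob (M : Matroid α) (A : α → Set ℝ)
    (hE : M.E.Finite) (hA : IsAreaFun M A)
    (e : α) (he : e ∈ M.E) (hblue : Blue M A e)
    (T : Set α) (hT : T ⊆ M.E \ {e}) :
    IsUOB (M.con {e}) A T ↔ IsUOB M A (insert e T) := by
  have : M.Finite := ⟨hE⟩
  rw [con_eq_contract]
  constructor
  · intro hU w hw
    obtain ⟨B, hB, heB⟩ := hblue w hw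
    exact hB.insert_of_contractElem heB (hU w (hw.mono sdiff_subset))
  · classical
    intro hU w hw
    obtain ⟨r, hr⟩ := (hA e he).1
    have heT : e ∉ T := fun h ↦ (hT h).2 rfl
    refine ((hU _ (hw.update_of_contractElem hr)).contractElem_of_insert
      (hblue.isNonloop hA) heT).congr fun x hx ↦ ?_
    exact Function.update_of_ne hx.2 r w
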